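/- Let h > 0 and k, w ∈ C²([0,h]) with k > 0 on [0,h] and w(0) = w(h) = 0, and let ε > 0 satisfy k(z) ≥ ε on [0,h]. There exists a constant K > 0, depending only on sup_{[0,h]} |w|, k(0), ε and h, such that for every T > 0, all F₁, F₂ ∈ C([0,T]), every q₀ ∈ C¹([0,h]), and all classical solutions q₁, q₂ of the transport equation with fluxes F₁, F₂ respectively and the same initial data q₀, one has for all t ∈ [0,T]: ∫₀ʰ (q₁(z,t) − q₂(z,t))² dz ≤ K e^{Kt} (1+t²) ∫₀ᵗ (F₁(s) − F₂(s))² ds. -/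

import Mathlib

/-!
The difference `u = q₁ - q₂` solves the same equation with flux `F₁ - F₂` and zero initial data.
Multiplying the equation by `2u` and integrating by parts, the energy `E = ∫ u²` satisfies
`E' = 2 k(0) u(0) (F₁ - F₂) - ∫ 2 k u_z² - ∫ w' u²`; the drift contributes no boundary term
because `w(0) = w(h) = 0`. The trace inequality `u(0)² ≤ (1/h + 1/(2ε)) E + 2ε ∫ u_z²` lets the
diffusion `∫ 2 k u_z² ≥ 2ε ∫ u_z²` absorb the boundary term, so
`E' ≤ (1/h + 1/(2ε) + sup |w'|) E + k(0)² (F₁ - F₂)²`, and Gronwall's lemma with `E(0) = 0`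
gives the estimate.
-/

open MeasureTheory Set Filter intervalIntegral

/-- A classical solution of the transport equation `q_t + (w q)_z = (k q_z)_z`
on `[0,h] × (0,T]` with flux boundary condition `q_z(0,t) = -F(t)`,
no-flux upper boundary condition `q_z(h,t) = 0`, and initial data `q₀`,
together with its partial derivatives `qz`, `qzz`, `qt`. -/
structure ClassicalSolution (h T : ℝ) (k w F q₀ : ℝ → ℝ)
    (q qz qzz qt : ℝ → ℝ → ℝ) : Prop where
  cont : ContinuousOn (fun x : ℝ × ℝ => q x.1 x.2) (Icc 0 h ×ˢ Icc 0 T)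
  hasDeriv_z : ∀ z ∈ Icc (0:ℝ) h, ∀ t ∈ Ioc (0:ℝ) T,
    HasDerivWithinAt (fun z' => q z' t) (qz z t) (Icc 0 h) z
  hasDeriv_zz : ∀ z ∈ Icc (0:ℝ) h, ∀ t ∈ Ioc (0:ℝ) T,
    HasDerivWithinAt (fun z' => qz z' t) (qzz z t) (Icc 0 h) z
  hasDeriv_t : ∀ z ∈ Icc (0:ℝ) h, ∀ t ∈ Ioc (0:ℝ) T,
    HasDerivWithinAt (fun t' => q z t') (qt z t) (Icc 0 T) t
  cont_z : ContinuousOn (fun x : ℝ × ℝ => qz x.1 x.2) (Icc 0 h ×ˢ Ioc 0 T)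
  cont_zz : ContinuousOn (fun x : ℝ × ℝ => qzz x.1 x.2) (Icc 0 h ×ˢ Ioc 0 T)
  cont_t : ContinuousOn (fun x : ℝ × ℝ => qt x.1 x.2) (Icc 0 h ×ˢ Ioc 0 T)
  pde : ∀ z ∈ Icc (0:ℝ) h, ∀ t ∈ Ioc (0:ℝ) T,
    qt z t + (derivWithin w (Icc 0 h) z * q z t + w z * qz z t)
      = derivWithin k (Icc 0 h) z * qz z t + k z * qzz z t
  bc_lower : ∀ t ∈ Ioc (0:ℝ) T, qz 0 t = -F t
  bc_upper : ∀ t ∈ Ioc (0:ℝ) T, qz h t = 0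
  ic : ∀ z ∈ Icc (0:ℝ) h, q z 0 = q₀ z

/-- `q` is a classical solution of the transport equation (partial derivatives exist). -/
def IsClassicalSolution (h T : ℝ) (k w F q₀ : ℝ → ℝ) (q : ℝ → ℝ → ℝ) : Prop :=
  ∃ qz qzz qt, ClassicalSolution h T k w F q₀ q qz qzz qt

open scoped Topology Interval

theorem continuousOn_intervalIntegral_of_continuousOn_prod {f : ℝ → ℝ → ℝ} {a b c d : ℝ}
    (hab : a ≤ b) (hcd : c ≤ d) (hf : ContinuousOn (Function.uncurry f) (Icc a b ×ˢ Icc c d)) :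
    ContinuousOn (fun t => ∫ z in a..b, f z t) (Icc c d) := by
  -- clamping both variables extends `f` continuously to the whole plane
  set g : ℝ → ℝ → ℝ := fun t z => f (projIcc a b hab z) (projIcc c d hcd t)
  have hg : Continuous (Function.uncurry g) :=
    hf.comp_continuous
      (f := fun p : ℝ × ℝ => ((projIcc a b hab p.2 : ℝ), (projIcc c d hcd p.1 : ℝ))) (by fun_prop)
      fun p => ⟨(projIcc a b hab p.2).2, (projIcc c d hcd p.1).2⟩
  refine (continuous_parametric_intervalIntegral_of_continuous' hg a b).continuousOn.congr
    fun t ht => integral_congr fun z hz => ?_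
  rw [uIcc_of_le hab] at hz
  simp [g, projIcc_of_mem _ hz, projIcc_of_mem _ ht]

theorem hasDerivAt_intervalIntegral_of_continuousOn_prod {f f' : ℝ → ℝ → ℝ} {a b c d t₀ : ℝ}
    (hab : a ≤ b) (ht₀ : t₀ ∈ Ioo c d)
    (hf : ContinuousOn (Function.uncurry f) (Icc a b ×ˢ Icc c d))
    (hf' : ContinuousOn (Function.uncurry f') (Icc a b ×ˢ Icc c d))
    (hderiv : ∀ z ∈ Icc a b, ∀ t ∈ Ioo c d, HasDerivAt (f z) (f' z t) t) :
    HasDerivAt (fun t => ∫ z in a..b, f z t) (∫ z in a..b, f' z t₀) t₀ := by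
  obtain ⟨M, hM⟩ := (isCompact_Icc.prod isCompact_Icc).exists_bound_of_continuousOn hf'
  have hslice : ∀ {g : ℝ → ℝ → ℝ}, ContinuousOn (Function.uncurry g) (Icc a b ×ˢ Icc c d) →
      ∀ t ∈ Ioo c d, AEStronglyMeasurable (fun z => g z t) (volume.restrict (Ι a b)) :=
    fun hg t ht => by
      rw [uIoc_of_le hab]
      exact ((hg.uncurry_right t (Ioo_subset_Icc_self ht)).mono Ioc_subset_Icc_self)
        |>.aestronglyMeasurable measurableSet_Ioc
  refine (hasDerivAt_integral_of_dominated_loc_of_deriv_le (bound := fun _ => M)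
    (F := fun t z => f z t) (F' := fun t z => f' z t)
    (Ioo_mem_nhds ht₀.1 ht₀.2) (eventually_of_mem (Ioo_mem_nhds ht₀.1 ht₀.2) (hslice hf))
    ?_ (hslice hf' t₀ ht₀) ?_ intervalIntegrable_const ?_).2
  · exact (hf.uncurry_right t₀ (Ioo_subset_Icc_self ht₀)).intervalIntegrable_of_Icc hab
  · refine ae_of_all _ fun z hz t ht => hM (z, t) ⟨?_, Ioo_subset_Icc_self ht⟩
    rw [uIoc_of_le hab] at hz
    exact Ioc_subset_Icc_self hz
  · refine ae_of_all _ fun z hz t ht => hderiv z ?_ t ht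
    rw [uIoc_of_le hab] at hz
    exact Ioc_subset_Icc_self hz

theorem neg_mul_two_mul_le_of_mem_Icc {θ L δ x y : ℝ} (hθ : θ ∈ Icc 0 L) (hδ : 0 < δ) :
    -(θ * (2 * x * y)) ≤ L / δ * x ^ 2 + L * δ * y ^ 2 := by
  have hsplit : L / δ * x ^ 2 + L * δ * y ^ 2 + θ * (2 * x * y)
      = (θ * (x + δ * y) ^ 2 + (L - θ) * (x ^ 2 + δ ^ 2 * y ^ 2)) / δ := by
    field_simp
    ring
  have : 0 ≤ θ * (x + δ * y) ^ 2 + (L - θ) * (x ^ 2 + δ ^ 2 * y ^ 2) := by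
    have := sub_nonneg.2 hθ.2
    have := hθ.1
    positivity
  linarith [div_nonneg this hδ.le]

theorem sq_le_integral_sq_add_integral_deriv_sq {f f' : ℝ → ℝ} {a b δ : ℝ} (hab : a < b)
    (hδ : 0 < δ) (hf : ContinuousOn f (Icc a b)) (hf' : ContinuousOn f' (Icc a b))
    (hderiv : ∀ z ∈ Ioo a b, HasDerivAt f (f' z) z) :
    f a ^ 2 ≤ (1 / (b - a) + 1 / δ) * (∫ z in a..b, f z ^ 2) + δ * ∫ z in a..b, f' z ^ 2 := by
  have hL : 0 < b - a := sub_pos.2 hab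
  -- FTC for `(b - z) f(z)²`, whose weight vanishes at the far end `b`
  have hftc : ∫ z in a..b, (f z ^ 2 - (b - z) * (2 * f z * f' z)) = (b - a) * f a ^ 2 := by
    rw [integral_eq_sub_of_hasDerivAt_of_le hab.le (f := fun z => -((b - z) * f z ^ 2))
      (by fun_prop) (fun z hz => ?_)
      (ContinuousOn.intervalIntegrable_of_Icc hab.le (by fun_prop))]
    · ring
    · refine ((((hasDerivAt_id z).const_sub b).mul ((hderiv z hz).pow 2)).neg).congr_deriv ?_
      simp only [id, Pi.pow_apply]
      ring
  have hint : ∀ {g : ℝ → ℝ}, ContinuousOn g (Icc a b) → IntervalIntegrable g volume a b :=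
    fun hg => hg.intervalIntegrable_of_Icc hab.le
  have hbound : (b - a) * f a ^ 2
      ≤ (1 + (b - a) / δ) * (∫ z in a..b, f z ^ 2) + (b - a) * δ * ∫ z in a..b, f' z ^ 2 := by
    rw [← hftc, ← intervalIntegral.integral_const_mul, ← intervalIntegral.integral_const_mul,
      ← integral_add (hint (by fun_prop)) (hint (by fun_prop))]
    refine integral_mono_on hab.le (hint (by fun_prop)) (hint (by fun_prop)) fun z hz => ?_
    have := neg_mul_two_mul_le_of_mem_Icc (x := f z) (y := f' z)
      (show b - z ∈ Icc 0 (b - a) from ⟨by linarith [hz.2], by linarith [hz.1]⟩) hδ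
    linarith
  rw [← mul_le_mul_iff_right₀ hL]
  calc (b - a) * f a ^ 2 ≤ _ := hbound
    _ = (b - a) * ((1 / (b - a) + 1 / δ) * (∫ z in a..b, f z ^ 2)
          + δ * ∫ z in a..b, f' z ^ 2) := by
      field_simp

theorem le_exp_mul_add_integral_of_hasDerivAt_le {E E' g : ℝ → ℝ} {K T : ℝ} (hK : 0 ≤ K)
    (hE : ContinuousOn E (Icc 0 T)) (hE' : ∀ s ∈ Ioo 0 T, HasDerivAt E (E' s) s)
    (hle : ∀ s ∈ Ioo 0 T, E' s ≤ K * E s + g s) (hg : ContinuousOn g (Icc 0 T))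
    (hg₀ : ∀ s ∈ Ioo 0 T, 0 ≤ g s) :
    ∀ t ∈ Icc 0 T, E t ≤ Real.exp (K * t) * (E 0 + ∫ s in 0..t, g s) := by
  intro t ht
  have hT : 0 ≤ T := ht.1.trans ht.2
  set Ψ : ℝ → ℝ := fun s => Real.exp (-(K * s)) * E s - ∫ r in 0..s, g r
  have hΨ_deriv : ∀ s ∈ Ioo 0 T,
      HasDerivAt Ψ (Real.exp (-(K * s)) * (E' s - K * E s) - g s) s := fun s hs => by
    have hprim : HasDerivAt (fun s => ∫ r in 0..s, g r) (g s) s :=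
      integral_hasDerivAt_right
        ((hg.mono (Icc_subset_Icc le_rfl hs.2.le)).intervalIntegrable_of_Icc hs.1.le)
        (hg.stronglyMeasurableAtFilter_nhdsWithin measurableSet_Icc s |>.filter_mono
          (nhdsWithin_eq_nhds.2 (Icc_mem_nhds hs.1 hs.2)).ge)
        (hg.continuousAt (Icc_mem_nhds hs.1 hs.2))
    refine ((((hasDerivAt_id s).const_mul K).neg.exp.mul (hE' s hs)).sub hprim).congr_deriv ?_
    simp only [id, Pi.neg_apply]
    ring
  have hΨ_anti : AntitoneOn Ψ (Icc 0 T) := by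
    refine antitoneOn_of_deriv_nonpos (convex_Icc 0 T) ?_ ?_ ?_
    · exact ((by fun_prop : Continuous fun s => Real.exp (-(K * s))).continuousOn.mul hE).sub
        ((continuousOn_primitive_interval' (hg.intervalIntegrable_of_Icc hT) left_mem_uIcc).mono
          Icc_subset_uIcc)
    · rw [interior_Icc]
      exact fun s hs => (hΨ_deriv s hs).differentiableAt.differentiableWithinAt
    · rw [interior_Icc]
      intro s hs
      rw [(hΨ_deriv s hs).deriv]
      have hexp : Real.exp (-(K * s)) ≤ 1 :=
        Real.exp_le_one_iff.2 (neg_nonpos.2 (mul_nonneg hK hs.1.le))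
      linarith [mul_le_mul_of_nonneg_left (sub_le_iff_le_add'.2 (hle s hs))
        (Real.exp_pos (-(K * s))).le, mul_le_of_le_one_left (hg₀ s hs) hexp]
  have hΨt : Ψ t ≤ Ψ 0 := hΨ_anti (left_mem_Icc.2 hT) ht ht.1
  simp only [Ψ, integral_same, mul_zero, neg_zero, Real.exp_zero, one_mul, sub_zero] at hΨt
  calc E t = Real.exp (K * t) * (Real.exp (-(K * t)) * E t) := by
        rw [← mul_assoc, ← Real.exp_add, add_neg_cancel, Real.exp_zero, one_mul]
    _ ≤ Real.exp (K * t) * (E 0 + ∫ s in 0..t, g s) := by gcongr; linarith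

namespace ClassicalSolution

variable {h T ε W : ℝ} {k w F F₁ F₂ q₀ : ℝ → ℝ}
  {q qz qzz qt q₁ qz₁ qzz₁ qt₁ q₂ qz₂ qzz₂ qt₂ : ℝ → ℝ → ℝ} {t : ℝ}

theorem sub (S₁ : ClassicalSolution h T k w F₁ q₀ q₁ qz₁ qzz₁ qt₁)
    (S₂ : ClassicalSolution h T k w F₂ q₀ q₂ qz₂ qzz₂ qt₂) :
    ClassicalSolution h T k w (F₁ - F₂) 0 (q₁ - q₂) (qz₁ - qz₂) (qzz₁ - qzz₂) (qt₁ - qt₂) where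
  cont := S₁.cont.sub S₂.cont
  hasDeriv_z z hz t ht := (S₁.hasDeriv_z z hz t ht).sub (S₂.hasDeriv_z z hz t ht)
  hasDeriv_zz z hz t ht := (S₁.hasDeriv_zz z hz t ht).sub (S₂.hasDeriv_zz z hz t ht)
  hasDeriv_t z hz t ht := (S₁.hasDeriv_t z hz t ht).sub (S₂.hasDeriv_t z hz t ht)
  cont_z := S₁.cont_z.sub S₂.cont_z
  cont_zz := S₁.cont_zz.sub S₂.cont_zz
  cont_t := S₁.cont_t.sub S₂.cont_t
  pde z hz t ht := by
    simp only [Pi.sub_apply]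
    linear_combination S₁.pde z hz t ht - S₂.pde z hz t ht
  bc_lower t ht := by
    simp only [Pi.sub_apply, S₁.bc_lower t ht, S₂.bc_lower t ht]
    ring
  bc_upper t ht := by simp [S₁.bc_upper t ht, S₂.bc_upper t ht]
  ic z hz := by simp [S₁.ic z hz, S₂.ic z hz]

theorem continuousOn_energy (S : ClassicalSolution h T k w F q₀ q qz qzz qt) (hh : 0 ≤ h)
    (hT : 0 ≤ T) : ContinuousOn (fun t => ∫ z in 0..h, q z t ^ 2) (Icc 0 T) :=
  continuousOn_intervalIntegral_of_continuousOn_prod hh hT (S.cont.fun_pow 2)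

theorem hasDerivAt_energy (S : ClassicalSolution h T k w F q₀ q qz qzz qt) (hh : 0 ≤ h)
    (ht : t ∈ Ioo 0 T) :
    HasDerivAt (fun t => ∫ z in 0..h, q z t ^ 2) (∫ z in 0..h, 2 * q z t * qt z t) t := by
  have hsub : Icc (t / 2) T ⊆ Ioc 0 T := fun s hs => ⟨by linarith [hs.1, ht.1], hs.2⟩
  refine hasDerivAt_intervalIntegral_of_continuousOn_prod (f := fun z s => q z s ^ 2)
    (f' := fun z s => 2 * q z s * qt z s) (c := t / 2) hh ⟨by linarith [ht.1], ht.2⟩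
    ((S.cont.fun_pow 2).mono (prod_mono subset_rfl (hsub.trans Ioc_subset_Icc_self)))
    ((continuousOn_const.mul
      (S.cont.mono (prod_mono subset_rfl (hsub.trans Ioc_subset_Icc_self)))).mul
      (S.cont_t.mono (prod_mono subset_rfl hsub))) fun z hz s hs => ?_
  have hs' : s ∈ Ioc 0 T := hsub (Ioo_subset_Icc_self hs)
  exact (((S.hasDeriv_t z hz s hs').hasDerivAt (Icc_mem_nhds hs'.1 hs.2)).pow 2).congr_deriv
    (by ring)

theorem integral_two_mul_qt_eq (S : ClassicalSolution h T k w F q₀ q qz qzz qt) (hh : 0 < h)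
    (hk : ContDiffOn ℝ 1 k (Icc 0 h)) (hw : ContDiffOn ℝ 1 w (Icc 0 h)) (hw0 : w 0 = 0)
    (hwh : w h = 0) (ht : t ∈ Ioc 0 T) :
    ∫ z in 0..h, 2 * q z t * qt z t
      = 2 * k 0 * q 0 t * F t - (∫ z in 0..h, 2 * k z * qz z t ^ 2)
        - ∫ z in 0..h, derivWithin w (Icc 0 h) z * q z t ^ 2 := by
  have hq := S.cont.uncurry_right t (Ioc_subset_Icc_self ht)
  have hqz := S.cont_z.uncurry_right t ht
  have hqt := S.cont_t.uncurry_right t ht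
  have hkc := hk.continuousOn
  have hwc := hw.continuousOn
  have hw' := hw.continuousOn_derivWithin (uniqueDiffOn_Icc hh) le_rfl
  have hint : ∀ {g : ℝ → ℝ}, ContinuousOn g (Icc 0 h) → IntervalIntegrable g volume 0 h :=
    fun hg => hg.intervalIntegrable_of_Icc hh.le
  have hflux : ∀ z ∈ Ioo 0 h, HasDerivAt (fun z => 2 * q z t * k z * qz z t - w z * q z t ^ 2)
      (2 * q z t * qt z t + 2 * k z * qz z t ^ 2 + derivWithin w (Icc 0 h) z * q z t ^ 2) z := by
    intro z hz
    have hnhds : Icc 0 h ∈ 𝓝 z := Icc_mem_nhds hz.1 hz.2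
    have hz' : z ∈ Icc 0 h := Ioo_subset_Icc_self hz
    have hdq := (S.hasDeriv_z z hz' t ht).hasDerivAt hnhds
    have hdqz := (S.hasDeriv_zz z hz' t ht).hasDerivAt hnhds
    have hdk := (hk.differentiableOn one_ne_zero z hz').hasDerivWithinAt.hasDerivAt hnhds
    have hdw := (hw.differentiableOn one_ne_zero z hz').hasDerivWithinAt.hasDerivAt hnhds
    refine ((((hdq.const_mul 2).mul hdk).mul hdqz).sub (hdw.mul (hdq.pow 2))).congr_deriv ?_
    simp only [Pi.mul_apply, Pi.pow_apply]
    linear_combination (-(2 * q z t)) * S.pde z hz' t ht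
  have hftc := integral_eq_sub_of_hasDerivAt_of_le hh.le
    (by fun_prop) hflux (hint (by fun_prop))
  rw [integral_add (hint (by fun_prop)) (hint (by fun_prop)),
    integral_add (hint (by fun_prop)) (hint (by fun_prop)), S.bc_lower t ht, S.bc_upper t ht,
    hw0, hwh] at hftc
  linarith

theorem integral_two_mul_qt_le (S : ClassicalSolution h T k w F q₀ q qz qzz qt) (hh : 0 < h)
    (hε : 0 < ε) (hk : ContDiffOn ℝ 1 k (Icc 0 h)) (hw : ContDiffOn ℝ 1 w (Icc 0 h))
    (hkε : ∀ z ∈ Icc 0 h, ε ≤ k z) (hw0 : w 0 = 0) (hwh : w h = 0)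
    (hW : ∀ z ∈ Icc 0 h, |derivWithin w (Icc 0 h) z| ≤ W) (ht : t ∈ Ioc 0 T) :
    ∫ z in 0..h, 2 * q z t * qt z t
      ≤ (1 / h + 1 / (2 * ε) + W) * (∫ z in 0..h, q z t ^ 2) + k 0 ^ 2 * F t ^ 2 := by
  have hq := S.cont.uncurry_right t (Ioc_subset_Icc_self ht)
  have hqz := S.cont_z.uncurry_right t ht
  have hkc := hk.continuousOn
  have hwc := hw.continuousOn
  have hw' := hw.continuousOn_derivWithin (uniqueDiffOn_Icc hh) le_rfl
  have hint : ∀ {g : ℝ → ℝ}, ContinuousOn g (Icc 0 h) → IntervalIntegrable g volume 0 h :=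
    fun hg => hg.intervalIntegrable_of_Icc hh.le
  have htrace := sq_le_integral_sq_add_integral_deriv_sq hh (mul_pos two_pos hε) hq hqz
    fun z hz => (S.hasDeriv_z z (Ioo_subset_Icc_self hz) t ht).hasDerivAt (Icc_mem_nhds hz.1 hz.2)
  have hdiffusion : 2 * ε * (∫ z in 0..h, qz z t ^ 2) ≤ ∫ z in 0..h, 2 * k z * qz z t ^ 2 := by
    rw [← intervalIntegral.integral_const_mul]
    refine integral_mono_on hh.le (hint (by fun_prop)) (hint (by fun_prop)) fun z hz => ?_
    have := hkε z hz
    gcongr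
  have hdrift :
      -(∫ z in 0..h, derivWithin w (Icc 0 h) z * q z t ^ 2) ≤ W * ∫ z in 0..h, q z t ^ 2 := by
    rw [← intervalIntegral.integral_const_mul, ← intervalIntegral.integral_neg]
    refine integral_mono_on hh.le (hint (by fun_prop)) (hint (by fun_prop)) fun z hz => ?_
    have := (neg_le_abs _).trans (hW z hz)
    nlinarith [sq_nonneg (q z t)]
  have hboundary : 2 * k 0 * q 0 t * F t ≤ q 0 t ^ 2 + k 0 ^ 2 * F t ^ 2 := by
    nlinarith [sq_nonneg (q 0 t - k 0 * F t)]
  rw [S.integral_two_mul_qt_eq hh hk hw hw0 hwh ht]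
  rw [sub_zero] at htrace
  linarith

theorem energy_le (S : ClassicalSolution h T k w F 0 q qz qzz qt) (hh : 0 < h) (hε : 0 < ε)
    (hk : ContDiffOn ℝ 1 k (Icc 0 h)) (hw : ContDiffOn ℝ 1 w (Icc 0 h))
    (hkε : ∀ z ∈ Icc 0 h, ε ≤ k z) (hw0 : w 0 = 0) (hwh : w h = 0)
    (hW : ∀ z ∈ Icc 0 h, |derivWithin w (Icc 0 h) z| ≤ W) (hF : ContinuousOn F (Icc 0 T)) :
    ∀ t ∈ Icc 0 T, ∫ z in 0..h, q z t ^ 2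
      ≤ Real.exp ((1 / h + 1 / (2 * ε) + W) * t) * (k 0 ^ 2 * ∫ s in 0..t, F s ^ 2) := by
  intro t ht
  have hW₀ : 0 ≤ W := (abs_nonneg _).trans (hW 0 ⟨le_rfl, hh.le⟩)
  have hE₀ : ∫ z in 0..h, q z 0 ^ 2 = 0 := by
    refine (integral_congr (g := fun _ => 0) fun z hz => ?_).trans integral_zero
    rw [uIcc_of_le hh.le] at hz
    simp [S.ic z hz]
  have := le_exp_mul_add_integral_of_hasDerivAt_le (by positivity)
    (S.continuousOn_energy hh.le (ht.1.trans ht.2)) (fun s hs => S.hasDerivAt_energy hh.le hs)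
    (fun s hs => S.integral_two_mul_qt_le hh hε hk hw hkε hw0 hwh hW (Ioo_subset_Ioc_self hs))
    (continuousOn_const.mul (hF.fun_pow 2)) (fun s _ => by positivity) t ht
  rwa [hE₀, zero_add, intervalIntegral.integral_const_mul] at this

end ClassicalSolution

theorem stability_estimate_general
    (h ε : ℝ) (k w : ℝ → ℝ) (hh : 0 < h) (hε : 0 < ε)
    (hk : ContDiffOn ℝ 2 k (Icc 0 h)) (hw : ContDiffOn ℝ 2 w (Icc 0 h))
    (hkε : ∀ z ∈ Icc (0:ℝ) h, ε ≤ k z)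
    (hw0 : w 0 = 0) (hwh : w h = 0) :
    ∃ K > (0:ℝ), ∀ (T : ℝ) (F₁ F₂ q₀ : ℝ → ℝ) (q₁ q₂ : ℝ → ℝ → ℝ),
      0 < T → ContinuousOn F₁ (Icc 0 T) → ContinuousOn F₂ (Icc 0 T) →
      ContDiffOn ℝ 1 q₀ (Icc 0 h) →
      IsClassicalSolution h T k w F₁ q₀ q₁ →
      IsClassicalSolution h T k w F₂ q₀ q₂ →
      ∀ t ∈ Icc (0:ℝ) T,
        (∫ z in (0:ℝ)..h, (q₁ z t - q₂ z t) ^ 2) ≤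
          K * Real.exp (K * t) * (1 + t ^ 2) * ∫ s in (0:ℝ)..t, (F₁ s - F₂ s) ^ 2 := by
  obtain ⟨W, hW⟩ := isCompact_Icc.exists_bound_of_continuousOn
    (hw.continuousOn_derivWithin (uniqueDiffOn_Icc hh) one_le_two)
  set K₀ := 1 / h + 1 / (2 * ε) + W
  have hK₀ : 0 < K₀ :=
    add_pos_of_pos_of_nonneg (by positivity) ((norm_nonneg _).trans (hW 0 ⟨le_rfl, hh.le⟩))
  refine ⟨K₀ + k 0 ^ 2, by positivity, ?_⟩
  rintro T F₁ F₂ q₀ q₁ q₂ - hF₁ hF₂ - ⟨qz₁, qzz₁, qt₁, S₁⟩ ⟨qz₂, qzz₂, qt₂, S₂⟩ t ht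
  have hI : 0 ≤ ∫ s in 0..t, (F₁ s - F₂ s) ^ 2 := integral_nonneg ht.1 fun _ _ => sq_nonneg _
  calc (∫ z in 0..h, (q₁ z t - q₂ z t) ^ 2)
      ≤ Real.exp (K₀ * t) * (k 0 ^ 2 * ∫ s in 0..t, (F₁ s - F₂ s) ^ 2) :=
        (S₁.sub S₂).energy_le hh hε (hk.of_le one_le_two) (hw.of_le one_le_two) hkε hw0 hwh hW
          (hF₁.sub hF₂) t ht
    _ = k 0 ^ 2 * Real.exp (K₀ * t) * 1 * ∫ s in 0..t, (F₁ s - F₂ s) ^ 2 := by ring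
    _ ≤ (K₀ + k 0 ^ 2) * Real.exp ((K₀ + k 0 ^ 2) * t) * (1 + t ^ 2)
          * ∫ s in 0..t, (F₁ s - F₂ s) ^ 2 := by
      gcongr
      · exact le_add_of_nonneg_left hK₀.le
      · exact ht.1
      · exact le_add_of_nonneg_right (sq_nonneg _)
      · exact le_add_of_nonneg_right (sq_nonneg t)

/-- Stability estimate: the `L²` distance between two solutions with the same
initial data is controlled by the `L²` distance between their fluxes. -/
theorem stability_estimate
    (h ε : ℝ) (k w : ℝ → ℝ) (hh : 0 < h) (hε : 0 < ε)
    (hk : ContDiffOn ℝ 2 k (Icc 0 h)) (hw : ContDiffOn ℝ 2 w (Icc 0 h))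
    (hkpos : ∀ z ∈ Icc (0:ℝ) h, 0 < k z)
    (hkε : ∀ z ∈ Icc (0:ℝ) h, ε ≤ k z)
    (hw0 : w 0 = 0) (hwh : w h = 0) :
    ∃ K > (0:ℝ), ∀ (T : ℝ) (F₁ F₂ q₀ : ℝ → ℝ) (q₁ q₂ : ℝ → ℝ → ℝ),
      0 < T → ContinuousOn F₁ (Icc 0 T) → ContinuousOn F₂ (Icc 0 T) →
      ContDiffOn ℝ 1 q₀ (Icc 0 h) →
      IsClassicalSolution h T k w F₁ q₀ q₁ →
      IsClassicalSolution h T k w F₂ q₀ q₂ →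
      ∀ t ∈ Icc (0:ℝ) T,
        (∫ z in (0:ℝ)..h, (q₁ z t - q₂ z t) ^ 2) ≤
          K * Real.exp (K * t) * (1 + t ^ 2) * ∫ s in (0:ℝ)..t, (F₁ s - F₂ s) ^ 2 :=
  stability_estimate_general h ε k w hh hε hk hw hkε hw0 hwh
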